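/- arXiv:0808.3247 — 2 statements merged into one kernel-verified Lean document; each statement's English description precedes it below -/
import Mathlib

section
/- Proposition 5 (entropy bound in L^p). Let p ∈ [1,∞), θ ∈ (0,1), let T be a countable set, and let Y(t) ∈ L^p(μ) for each t ∈ T; write d_p(t,s) = ‖Y(t) − Y(s)‖_{L^p(μ)}. Suppose (F_k)_{k≥0} is a nondecreasing sequence of finite subsets of T with ⋃_k F_k = T, F_0 = {t_0}, card(F_k) = N_k, and such that for every k ≥ 0 the set F_k is a θ^k-net of (T, d_p). Then ‖sup_{t∈T} Y(t)‖_{L^p(μ)} ≤ ‖Y(t_0)‖_{L^p(μ)} + Σ_{k=1}^∞ θ^{k−1} N_k^{1/p}, where sup_{t∈T} Y(t) denotes the pointwise supremum. -/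
open MeasureTheory ENNReal Set

noncomputable section

/-- The set of exponents p with a < p and p < b (b may be infinite). -/
def expSet (a : ℝ) (b : ℝ≥0∞) : Set ℝ := {p : ℝ | a < p ∧ ENNReal.ofReal p < b}

/-- The class Ψ(a,b). -/
structure IsPsi (a : ℝ) (b : ℝ≥0∞) (ψ : ℝ → ℝ) : Prop where
  one_le : ∀ p ∈ expSet a b, 1 ≤ ψ p
  bddOnCompacts : ∀ c d : ℝ, c ∈ expSet a b → d ∈ expSet a b → BddAbove (ψ '' Set.Icc c d)
  logConvex : ConvexOn ℝ (expSet a b) fun p => Real.log (ψ p)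

/-- L^p norm (real exponent). -/
def lpNorm {X : Type*} [MeasurableSpace X] (μ : Measure X) (f : X → ℝ) (p : ℝ) : ℝ≥0∞ :=
  (∫⁻ x, ENNReal.ofReal (|f x| ^ p) ∂μ) ^ (1 / p)

/-- Bilateral Grand Lebesgue norm. -/
def glNorm {X : Type*} [MeasurableSpace X] (μ : Measure X) (a : ℝ) (b : ℝ≥0∞) (ψ : ℝ → ℝ)
    (f : X → ℝ) : ℝ≥0∞ :=
  ⨆ p ∈ expSet a b, lpNorm μ f p / ENNReal.ofReal (ψ p)

/-- L^p norm for extended-real-valued functions. -/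
def lpNormE {X : Type*} [MeasurableSpace X] (μ : Measure X) (g : X → EReal) (p : ℝ) : ℝ≥0∞ :=
  (∫⁻ x, (g x).abs ^ p ∂μ) ^ (1 / p)

/-- Bilateral Grand Lebesgue norm for extended-real-valued functions. -/
def glNormE {X : Type*} [MeasurableSpace X] (μ : Measure X) (a : ℝ) (b : ℝ≥0∞) (ψ : ℝ → ℝ)
    (g : X → EReal) : ℝ≥0∞ :=
  ⨆ p ∈ expSet a b, lpNormE μ g p / ENNReal.ofReal (ψ p)

/-- L^p norm for `ℝ≥0∞`-valued functions. -/
def lpNormNN {X : Type*} [MeasurableSpace X] (μ : Measure X) (g : X → ℝ≥0∞) (p : ℝ) : ℝ≥0∞ :=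
  (∫⁻ x, g x ^ p ∂μ) ^ (1 / p)

end

/-!
Chaining. Project every point to the θ^k-net `F k` by a map `π k`. A point `t ∈ F m` is joined
to `t₀` through `π (m-1) t, π (m-2) (π (m-1) t), …`, so pointwise `Y t - Y t₀` is at most the sum
over `j` of the largest increment `|Y s - Y (π j s)|` with `s ∈ F (j+1)`. Bounding the `p`-th power
of a maximum of `N` functions by their sum, that increment has `L^p` norm at most
`θ^j N_{j+1}^{1/p}`, and Minkowski's inequality for series finishes the proof.
-/

lemma ENNReal.iSup_rpow {ι : Sort*} [Nonempty ι] (f : ι → ℝ≥0∞) {c : ℝ} (hc : 0 ≤ c) :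
    (⨆ i, f i) ^ c = ⨆ i, f i ^ c :=
  (ENNReal.monotone_rpow_of_nonneg hc).map_ciSup_of_continuousAt
    ENNReal.continuous_rpow_const.continuousAt (OrderTop.bddAbove _)

section LpNormNN

variable {X : Type*} [MeasurableSpace X] {μ : Measure X} {p : ℝ}

lemma lpNormNN_rpow (hp : p ≠ 0) (g : X → ℝ≥0∞) : lpNormNN μ g p ^ p = ∫⁻ x, g x ^ p ∂μ := by
  rw [lpNormNN, ← ENNReal.rpow_mul, one_div_mul_cancel hp, ENNReal.rpow_one]

lemma lpNormNN_ofReal_abs (hp : 0 ≤ p) (f : X → ℝ) :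
    lpNormNN μ (fun x => ENNReal.ofReal |f x|) p = _root_.lpNorm μ f p := by
  simp only [lpNormNN, _root_.lpNorm, ENNReal.ofReal_rpow_of_nonneg (abs_nonneg _) hp]

lemma lpNormNN_mono (hp : 0 ≤ p) {g h : X → ℝ≥0∞} (hgh : ∀ x, g x ≤ h x) :
    lpNormNN μ g p ≤ lpNormNN μ h p :=
  ENNReal.rpow_le_rpow (lintegral_mono fun x => ENNReal.rpow_le_rpow (hgh x) hp)
    (one_div_nonneg.mpr hp)

lemma lpNormE_le_lpNormNN (hp : 0 ≤ p) {g : X → EReal} {h : X → ℝ≥0∞}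
    (hgh : ∀ x, (g x).abs ≤ h x) : lpNormE μ g p ≤ lpNormNN μ h p :=
  lpNormNN_mono (μ := μ) hp hgh

lemma lpNormNN_add_le (hp : 1 ≤ p) {g h : X → ℝ≥0∞} (hg : AEMeasurable g μ)
    (hh : AEMeasurable h μ) :
    lpNormNN μ (fun x => g x + h x) p ≤ lpNormNN μ g p + lpNormNN μ h p :=
  ENNReal.lintegral_Lp_add_le hg hh hp

lemma lpNormNN_finset_sum_le {ι : Type*} (hp : 1 ≤ p) (s : Finset ι) {g : ι → X → ℝ≥0∞}
    (hg : ∀ i, AEMeasurable (g i) μ) :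
    lpNormNN μ (fun x => ∑ i ∈ s, g i x) p ≤ ∑ i ∈ s, lpNormNN μ (g i) p := by
  classical
  induction s using Finset.induction_on with
  | empty =>
    have hp0 : 0 < p := by linarith
    simp [lpNormNN, ENNReal.zero_rpow_of_pos hp0, hp0]
  | insert i s hi ih =>
    simp only [Finset.sum_insert hi]
    exact (lpNormNN_add_le hp (hg i) (Finset.aemeasurable_fun_sum s fun j _ => hg j)).trans
      (add_le_add le_rfl ih)

lemma lpNormNN_iSup_of_monotone (hp : 0 ≤ p) {g : ℕ → X → ℝ≥0∞}
    (hg : ∀ n, AEMeasurable (g n) μ) (hmono : ∀ x, Monotone fun n => g n x) :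
    lpNormNN μ (fun x => ⨆ n, g n x) p = ⨆ n, lpNormNN μ (g n) p := by
  simp only [lpNormNN, ENNReal.iSup_rpow _ hp]
  rw [lintegral_iSup' (fun n => (hg n).pow_const p)
    (ae_of_all _ fun x _ _ hmn => ENNReal.rpow_le_rpow (hmono x hmn) hp),
    ENNReal.iSup_rpow _ (one_div_nonneg.mpr hp)]

lemma lpNormNN_tsum_le (hp : 1 ≤ p) {g : ℕ → X → ℝ≥0∞} (hg : ∀ i, AEMeasurable (g i) μ) :
    lpNormNN μ (fun x => ∑' i, g i x) p ≤ ∑' i, lpNormNN μ (g i) p := by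
  simp only [ENNReal.tsum_eq_iSup_nat]
  rw [lpNormNN_iSup_of_monotone (g := fun n x => ∑ i ∈ Finset.range n, g i x) (by linarith)
    (fun n => Finset.aemeasurable_fun_sum _ fun i _ => hg i)
    fun x _ _ hmn => Finset.sum_le_sum_of_subset (Finset.range_subset_range.mpr hmn)]
  exact iSup_mono fun n => lpNormNN_finset_sum_le hp _ hg

lemma lpNormNN_finset_sup_le {ι : Type*} (hp : 0 < p) (s : Finset ι) {g : ι → X → ℝ≥0∞}
    (hg : ∀ i ∈ s, AEMeasurable (g i) μ) {c : ℝ≥0∞} (hc : ∀ i ∈ s, lpNormNN μ (g i) p ≤ c) :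
    lpNormNN μ (fun x => s.sup fun i => g i x) p ≤ c * (s.card : ℝ≥0∞) ^ (1 / p) := by
  have hsup : ∀ x, (s.sup fun i => g i x) ^ p ≤ ∑ i ∈ s, g i x ^ p := fun x =>
    s.apply_sup_le_sum (f := fun y : ℝ≥0∞ => y ^ p) (ENNReal.zero_rpow_of_pos hp) fun {a b} => by
      rw [(ENNReal.monotone_rpow_of_nonneg hp.le).map_max]
      exact max_le le_self_add le_add_self
  calc lpNormNN μ (fun x => s.sup fun i => g i x) p
      ≤ (∫⁻ x, ∑ i ∈ s, g i x ^ p ∂μ) ^ (1 / p) :=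
        ENNReal.rpow_le_rpow (lintegral_mono hsup) (by positivity)
    _ = (∑ i ∈ s, lpNormNN μ (g i) p ^ p) ^ (1 / p) := by
        rw [lintegral_finsetSum' s fun i hi => (hg i hi).pow_const p]
        simp only [lpNormNN_rpow hp.ne']
    _ ≤ (∑ _i ∈ s, c ^ p) ^ (1 / p) := by
        gcongr with i hi
        exact hc i hi
    _ = c * (s.card : ℝ≥0∞) ^ (1 / p) := by
        rw [Finset.sum_const, nsmul_eq_mul, ENNReal.mul_rpow_of_nonneg _ _ (by positivity),
          ← ENNReal.rpow_mul, mul_one_div_cancel hp.ne', ENNReal.rpow_one, mul_comm]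

end LpNormNN

section Chaining

variable {T : Type*}

def chainIncrement (F : ℕ → Finset T) (π : ℕ → T → T) (f : T → ℝ) (j : ℕ) : ℝ≥0∞ :=
  (F (j + 1)).sup fun s => ENNReal.ofReal |f s - f (π j s)|

variable {F : ℕ → Finset T} {t₀ : T} {π : ℕ → T → T}

lemma ofReal_sub_le_sum_chainIncrement (hF0 : F 0 = {t₀}) (hπ : ∀ k t, π k t ∈ F k)
    (f : T → ℝ) {m : ℕ} {t : T} (ht : t ∈ F m) :
    ENNReal.ofReal (f t - f t₀) ≤ ∑ j ∈ Finset.range m, chainIncrement F π f j := by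
  induction m generalizing t with
  | zero =>
    rw [hF0, Finset.mem_singleton] at ht
    simp [ht]
  | succ m ih =>
    have hstep : ENNReal.ofReal (f t - f (π m t)) ≤ chainIncrement F π f m :=
      (ENNReal.ofReal_le_ofReal (le_abs_self _)).trans
        (Finset.le_sup (f := fun s => ENNReal.ofReal |f s - f (π m s)|) ht)
    calc ENNReal.ofReal (f t - f t₀)
        = ENNReal.ofReal ((f (π m t) - f t₀) + (f t - f (π m t))) := by
          rw [sub_add_sub_cancel']
      _ ≤ ENNReal.ofReal (f (π m t) - f t₀) + ENNReal.ofReal (f t - f (π m t)) :=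
        ENNReal.ofReal_add_le
      _ ≤ ∑ j ∈ Finset.range (m + 1), chainIncrement F π f j := by
        rw [Finset.sum_range_succ]
        exact add_le_add (ih (hπ m t)) hstep

lemma ofReal_sub_le_tsum_chainIncrement (hF0 : F 0 = {t₀}) (hπ : ∀ k t, π k t ∈ F k)
    (hcover : ∀ t, ∃ k, t ∈ F k) (f : T → ℝ) (t : T) :
    ENNReal.ofReal (f t - f t₀) ≤ ∑' j, chainIncrement F π f j :=
  let ⟨_, ht⟩ := hcover t
  (ofReal_sub_le_sum_chainIncrement hF0 hπ f ht).trans (ENNReal.sum_le_tsum _)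

lemma measurable_chainIncrement {X : Type*} [MeasurableSpace X] {Y : T → X → ℝ}
    (hY : ∀ t, Measurable (Y t)) (j : ℕ) :
    Measurable fun x => chainIncrement F π (fun t => Y t x) j := by
  have hsup : (fun x => chainIncrement F π (fun t => Y t x) j)
      = (F (j + 1)).sup fun s x => ENNReal.ofReal |Y s x - Y (π j s) x| := by
    ext x
    simp only [chainIncrement, Finset.sup_apply]
  rw [hsup]
  exact Finset.sup_induction measurable_const (fun _ h₁ _ h₂ => h₁.sup h₂)
    fun s _ => ((hY s).sub (hY (π j s))).abs.ennreal_ofReal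

end Chaining

lemma EReal.abs_iSup_coe_le {T : Type*} {f : T → ℝ} (t₀ : T) {M : ℝ≥0∞}
    (hM : ∀ t, ENNReal.ofReal (f t - f t₀) ≤ M) :
    (⨆ t, (f t : EReal)).abs ≤ ENNReal.ofReal |f t₀| + M := by
  rcases eq_or_ne M ⊤ with rfl | hMtop
  · simp
  have hub : ∀ t, f t ≤ f t₀ + M.toReal := fun t => by
    linarith [(ENNReal.ofReal_le_iff_le_toReal hMtop).mp (hM t)]
  have hlo : (f t₀ : EReal) ≤ ⨆ t, (f t : EReal) := le_iSup (fun t => (f t : EReal)) t₀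
  have hhi : ⨆ t, (f t : EReal) ≤ ((f t₀ + M.toReal : ℝ) : EReal) :=
    iSup_le fun t => EReal.coe_le_coe_iff.mpr (hub t)
  generalize ⨆ t, (f t : EReal) = S at hlo hhi
  induction S using EReal.rec with
  | bot => exact absurd hlo (not_le.mpr (EReal.bot_lt_coe _))
  | top => exact absurd hhi (not_le.mpr (EReal.coe_lt_top _))
  | coe r =>
    rw [EReal.coe_le_coe_iff] at hlo hhi
    have hr : |r| ≤ |f t₀| + M.toReal := abs_le.mpr
      ⟨by linarith [neg_abs_le (f t₀), M.toReal_nonneg], by linarith [le_abs_self (f t₀)]⟩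
    calc (r : EReal).abs = ENNReal.ofReal |r| := EReal.abs_def r
      _ ≤ ENNReal.ofReal (|f t₀| + M.toReal) := ENNReal.ofReal_le_ofReal hr
      _ ≤ ENNReal.ofReal |f t₀| + ENNReal.ofReal M.toReal := ENNReal.ofReal_add_le
      _ = ENNReal.ofReal |f t₀| + M := by rw [ENNReal.ofReal_toReal hMtop]

theorem entropy_bound_lp_general
    {X : Type*} [MeasurableSpace X] (μ : Measure X)
    (p : ℝ) (hp : 1 ≤ p) (θ : ℝ)
    (T : Type*)
    (Y : T → X → ℝ) (hYmeas : ∀ t, Measurable (Y t))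
    (F : ℕ → Finset T)
    (hcover : ∀ t, ∃ k, t ∈ F k)
    (t₀ : T) (hF0 : F 0 = {t₀})
    (hnet : ∀ k : ℕ, ∀ t : T, ∃ s ∈ F k,
      lpNorm μ (fun x => Y t x - Y s x) p ≤ ENNReal.ofReal (θ ^ k)) :
    lpNormE μ (fun x => ⨆ t, (Y t x : EReal)) p ≤
      lpNorm μ (Y t₀) p +
        ∑' k : ℕ, ENNReal.ofReal (θ ^ k) * ((F (k + 1)).card : ℝ≥0∞) ^ (1 / p) := by
  have hp0 : 0 < p := by linarith
  choose π hπF hπ using hnet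
  set G : ℕ → X → ℝ≥0∞ := fun j x => chainIncrement F π (fun t => Y t x) j
  have hG_meas : ∀ j, Measurable (G j) := measurable_chainIncrement hYmeas
  have hG_norm : ∀ j, lpNormNN μ (G j) p ≤ ENNReal.ofReal (θ ^ j) * (F (j + 1)).card ^ (1 / p) :=
    fun j => lpNormNN_finset_sup_le hp0 _
      (fun s _ => ((hYmeas s).sub (hYmeas (π j s))).abs.ennreal_ofReal.aemeasurable)
      fun s _ => (lpNormNN_ofReal_abs hp0.le _).trans_le (hπ j s)
  calc lpNormE μ (fun x => ⨆ t, (Y t x : EReal)) p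
      ≤ lpNormNN μ (fun x => ENNReal.ofReal |Y t₀ x| + ∑' j, G j x) p :=
        lpNormE_le_lpNormNN hp0.le fun x => EReal.abs_iSup_coe_le t₀
          (ofReal_sub_le_tsum_chainIncrement hF0 hπF hcover _)
    _ ≤ lpNormNN μ (fun x => ENNReal.ofReal |Y t₀ x|) p + lpNormNN μ (fun x => ∑' j, G j x) p :=
        lpNormNN_add_le hp (hYmeas t₀).abs.ennreal_ofReal.aemeasurable
          (Measurable.tsum hG_meas).aemeasurable
    _ ≤ lpNorm μ (Y t₀) p + ∑' j, lpNormNN μ (G j) p := by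
        rw [lpNormNN_ofReal_abs hp0.le]
        exact add_le_add le_rfl (lpNormNN_tsum_le hp fun j => (hG_meas j).aemeasurable)
    _ ≤ _ := add_le_add le_rfl (ENNReal.tsum_le_tsum hG_norm)

/-- Proposition 5 (entropy bound in `L^p`). -/
theorem entropy_bound_lp
    {X : Type*} [MeasurableSpace X] (μ : Measure X) [SigmaFinite μ]
    (p : ℝ) (hp : 1 ≤ p) (θ : ℝ) (hθ0 : 0 < θ) (hθ1 : θ < 1)
    (T : Type*) [Countable T]
    (Y : T → X → ℝ) (hYmeas : ∀ t, Measurable (Y t))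
    (hLp : ∀ t, lpNorm μ (Y t) p < ⊤)
    (F : ℕ → Finset T) (hFmono : Monotone F)
    (hcover : ∀ t, ∃ k, t ∈ F k)
    (t₀ : T) (hF0 : F 0 = {t₀})
    (hnet : ∀ k : ℕ, ∀ t : T, ∃ s ∈ F k,
      lpNorm μ (fun x => Y t x - Y s x) p ≤ ENNReal.ofReal (θ ^ k)) :
    lpNormE μ (fun x => ⨆ t, (Y t x : EReal)) p ≤
      lpNorm μ (Y t₀) p +
        ∑' k : ℕ, ENNReal.ofReal (θ ^ k) * ((F (k + 1)).card : ℝ≥0∞) ^ (1 / p) :=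
  entropy_bound_lp_general μ p hp θ T Y hYmeas F hcover t₀ hF0 hnet
end

section
/- Entropy with logarithmic correction, case κ₂ < κ₁ (inequality (3.14)). Let ψ ∈ Ψ(a,b), let 0 < κ₂ < κ₁ < a and C₀ ≥ 1, let T be a finite nonempty set and Y(t) : X → ℝ measurable for each t ∈ T with sup_{t∈T} ‖Y(t)‖_{G(ψ)} ≤ 1. Write d_ψ(t,s) = ‖Y(t) − Y(s)‖_{G(ψ)} and assume that for every ε ∈ (0,1] there exists an ε-net of (T, d_ψ) of cardinality at most C₀ ε^{−κ₁} (1 + |log ε|)^{−κ₂}. Then, setting ψ_{κ₁,κ₂}(p) = (p/(p − κ₁))^{1 − κ₂/κ₁} · ψ(p) for p ∈ (a,b), there is a constant C depending only on C₀, κ₁ and κ₂ such that sup_{p∈(a,b)} ‖max_{t∈T} Y(t)‖_{L^p(μ)}/ψ_{κ₁,κ₂}(p) ≤ C. -/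
open MeasureTheory ENNReal Set

/-!
Chaining at the dyadic scales `2 ^ (-k)`. With nets `F k` and projections `π k`, every `t` is
linked to `F 0` by `t ↦ π K t ↦ π (K - 1) (π K t) ↦ ⋯`, so pointwise `|sup_t Y t|` is at most the
level-`K` defect, plus the maxima over `F (k + 1)` of the link increments, plus the maximum over
`F 0`. The `L^p`-norm of a maximum of `N` functions is at most `N ^ (1 / p)` times the largest
norm, and a link from level `k + 1` has norm at most `2 ^ (-k) ψ p`; taking `K = |T|` makes the
defect harmless. With `N_k ≤ C₀ 2 ^ (k κ₁) (1 + k log 2) ^ (-κ₂)`, `θ = 1 - κ₁ / p` and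
`β = κ₂ / p`, what remains is the series `∑ k ^ (-β) 2 ^ (-k θ) = O(θ ^ (β - 1) / (1 - β))`, and
`θ ^ (β - 1) ≤ 3 (p / (p - κ₁)) ^ (1 - κ₂ / κ₁)` since the two exponents differ by `(κ₂ / κ₁) θ`
and `u ^ (1 / u) ≤ e`.
-/

open Finset

lemma one_sub_mul_add_one_rpow_neg_le {β : ℝ} (hβ0 : 0 ≤ β) (hβ1 : β ≤ 1) {x : ℝ} (hx : 0 ≤ x) :
    (1 - β) * (x + 1) ^ (-β) ≤ (x + 1) ^ (1 - β) - x ^ (1 - β) := by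
  have hx1 : 0 < x + 1 := by linarith
  have hs : -1 ≤ -(x + 1)⁻¹ := neg_le_neg (inv_le_one_of_one_le₀ (by linarith))
  have hbern := rpow_one_add_le_one_add_mul_self hs (p := 1 - β) (by linarith) (by linarith)
  have hsplit : x = (x + 1) * (1 + -(x + 1)⁻¹) := by field_simp; ring
  have hpow : (x + 1) ^ (-β) = (x + 1) ^ (1 - β) * (x + 1)⁻¹ := by
    rw [← Real.rpow_neg_one, ← Real.rpow_add hx1]; ring_nf
  calc (1 - β) * (x + 1) ^ (-β)
      = (x + 1) ^ (1 - β) - (x + 1) ^ (1 - β) * (1 + (1 - β) * -(x + 1)⁻¹) := by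
        rw [hpow]; ring
    _ ≤ (x + 1) ^ (1 - β) - (x + 1) ^ (1 - β) * (1 + -(x + 1)⁻¹) ^ (1 - β) := by gcongr
    _ = (x + 1) ^ (1 - β) - x ^ (1 - β) := by
        rw [← Real.mul_rpow hx1.le (by linarith), ← hsplit]

lemma sum_range_add_one_rpow_neg_le {β : ℝ} (hβ0 : 0 ≤ β) (hβ1 : β < 1) (M : ℕ) :
    ∑ k ∈ range M, ((k : ℝ) + 1) ^ (-β) ≤ (M : ℝ) ^ (1 - β) / (1 - β) := by
  rw [le_div_iff₀ (by linarith), sum_mul]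
  calc ∑ k ∈ range M, ((k : ℝ) + 1) ^ (-β) * (1 - β)
      ≤ ∑ k ∈ range M, (((k + 1 : ℕ) : ℝ) ^ (1 - β) - (k : ℝ) ^ (1 - β)) := by
        gcongr with k
        push_cast
        linarith [one_sub_mul_add_one_rpow_neg_le hβ0 hβ1.le (Nat.cast_nonneg (α := ℝ) k)]
    _ = (M : ℝ) ^ (1 - β) := by
        rw [sum_range_sub (fun k : ℕ => (k : ℝ) ^ (1 - β))]
        simp [Real.zero_rpow (by linarith : 1 - β ≠ 0)]

lemma sum_range_two_rpow_neg_pow_succ_le {θ : ℝ} (hθ0 : 0 < θ) (hθ1 : θ ≤ 1) (K : ℕ) :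
    ∑ k ∈ range K, ((2 : ℝ) ^ (-θ)) ^ (k + 1) ≤ 2 / θ := by
  set r : ℝ := (2 : ℝ) ^ (-θ)
  have hr0 : 0 ≤ r := by positivity
  have hr : r ≤ 1 - θ / 2 := by
    have h := rpow_one_add_le_one_add_mul_self (s := -(1 / 2)) (by norm_num) hθ0.le hθ1
    rw [show (1 : ℝ) + -(1 / 2) = 2⁻¹ by norm_num, Real.inv_rpow (by norm_num),
      ← Real.rpow_neg (by norm_num)] at h
    linarith
  calc ∑ k ∈ range K, r ^ (k + 1) = ∑ k ∈ Ico 1 (K + 1), r ^ k := by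
        rw [sum_Ico_eq_sum_range]; simp [add_comm]
    _ ≤ r ^ 1 / (1 - r) := geom_sum_Ico_le_of_lt_one hr0 (by linarith)
    _ ≤ 1 / (θ / 2) := by
        gcongr <;> linarith
    _ = 2 / θ := by field_simp

lemma one_add_mul_log_two_rpow_neg_le {β : ℝ} (hβ0 : 0 ≤ β) (hβ1 : β ≤ 1) {x : ℝ} (hx : 0 < x) :
    (1 + x * Real.log 2) ^ (-β) ≤ 2 * x ^ (-β) := by
  have hlog : 1 / 2 < Real.log 2 := by linarith [Real.log_two_gt_d9]
  calc (1 + x * Real.log 2) ^ (-β) ≤ (x * 2⁻¹) ^ (-β) :=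
        Real.rpow_le_rpow_of_nonpos (by positivity) (by nlinarith) (by linarith)
    _ = (2 : ℝ) ^ β * x ^ (-β) := by
        rw [Real.mul_rpow hx.le (by norm_num), Real.inv_rpow (by norm_num),
          ← Real.rpow_neg (by norm_num), neg_neg, mul_comm]
    _ ≤ 2 * x ^ (-β) := by
        gcongr
        exact Real.rpow_le_self_of_one_le (by norm_num) hβ1

lemma sum_range_add_one_rpow_neg_mul_pow_le {β θ : ℝ} (hβ0 : 0 ≤ β) (hβ1 : β < 1)
    (hθ0 : 0 < θ) (hθ1 : θ ≤ 1) (K : ℕ) :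
    ∑ k ∈ range K, ((k : ℝ) + 1) ^ (-β) * ((2 : ℝ) ^ (-θ)) ^ (k + 1)
      ≤ (1 / (1 - β) + 2) * θ ^ (β - 1) := by
  set r : ℝ := (2 : ℝ) ^ (-θ)
  have hr0 : 0 ≤ r := by positivity
  have hr1 : r ≤ 1 := Real.rpow_le_one_of_one_le_of_nonpos (by norm_num) (by linarith)
  have hθβ : (θ⁻¹) ^ (1 - β) = θ ^ (β - 1) := by
    rw [Real.inv_rpow hθ0.le, ← Real.rpow_neg hθ0.le, neg_sub]
  -- Split at `k + 1 ≈ θ⁻¹`: below it `r ^ (k + 1) ≤ 1`, above it `(k + 1) ^ (-β) ≤ θ ^ β`.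
  rw [← sum_filter_add_sum_filter_not (range K) (fun k : ℕ => ((k : ℝ) + 1) * θ ≤ 1), add_mul]
  gcongr
  · set M := ⌊θ⁻¹⌋₊
    calc ∑ k ∈ (range K).filter (fun k : ℕ => ((k : ℝ) + 1) * θ ≤ 1),
          ((k : ℝ) + 1) ^ (-β) * r ^ (k + 1)
        ≤ ∑ k ∈ range M, ((k : ℝ) + 1) ^ (-β) := by
          refine sum_le_sum_of_subset_of_nonneg (fun k hk => ?_) (fun _ _ _ => by positivity)
            |>.trans' (sum_le_sum fun k _ => ?_)
          · rw [Finset.mem_range, Nat.lt_iff_add_one_le]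
            refine Nat.le_floor ?_
            rw [← one_div, le_div_iff₀ hθ0]
            exact_mod_cast (mem_filter.mp hk).2
          · exact mul_le_of_le_one_right (by positivity) (pow_le_one₀ hr0 hr1)
      _ ≤ (M : ℝ) ^ (1 - β) / (1 - β) := sum_range_add_one_rpow_neg_le hβ0 hβ1 M
      _ ≤ 1 / (1 - β) * θ ^ (β - 1) := by
          rw [← hθβ, one_div_mul_eq_div]
          gcongr
          exact Nat.floor_le (by positivity)
  · calc ∑ k ∈ (range K).filter (fun k : ℕ => ¬((k : ℝ) + 1) * θ ≤ 1),
          ((k : ℝ) + 1) ^ (-β) * r ^ (k + 1)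
        ≤ ∑ k ∈ range K, θ ^ β * r ^ (k + 1) := by
          refine sum_le_sum_of_subset_of_nonneg (filter_subset _ _) (fun _ _ _ => by positivity)
            |>.trans' (sum_le_sum fun k hk => ?_)
          have hk : θ⁻¹ ≤ (k : ℝ) + 1 := by
            rw [inv_le_iff_one_le_mul₀' hθ0]; linarith [(mem_filter.mp hk).2]
          gcongr
          calc ((k : ℝ) + 1) ^ (-β) ≤ (θ⁻¹) ^ (-β) :=
                Real.rpow_le_rpow_of_nonpos (by positivity) hk (by linarith)
            _ = θ ^ β := by rw [Real.inv_rpow hθ0.le, ← Real.rpow_neg hθ0.le, neg_neg]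
      _ = θ ^ β * ∑ k ∈ range K, r ^ (k + 1) := by rw [mul_sum]
      _ ≤ θ ^ β * (2 / θ) := by gcongr; exact sum_range_two_rpow_neg_pow_succ_le hθ0 hθ1 K
      _ = 2 * θ ^ (β - 1) := by
          rw [Real.rpow_sub hθ0, Real.rpow_one]; ring

lemma rpow_div_self_le_three {u s : ℝ} (hu : 0 < u) (hs0 : 0 ≤ s) (hs1 : s ≤ 1) :
    u ^ (s / u) ≤ 3 := by
  have hlog : Real.log u * (s / u) ≤ 1 := by
    have h := Real.log_le_rpow_div hu.le one_pos
    rw [Real.rpow_one, div_one] at h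
    calc Real.log u * (s / u) ≤ u * (s / u) := by gcongr
      _ = s := by field_simp
      _ ≤ 1 := hs1
  calc u ^ (s / u) = Real.exp (Real.log u * (s / u)) := Real.rpow_def_of_pos hu _
    _ ≤ Real.exp 1 := Real.exp_le_exp.mpr hlog
    _ ≤ 3 := by linarith [Real.exp_one_lt_d9]

lemma one_sub_div_rpow_le {κ₁ κ₂ p : ℝ} (hκ₂ : 0 < κ₂) (hκ₁₂ : κ₂ ≤ κ₁) (hκ₁p : κ₁ < p) :
    (1 - κ₁ / p) ^ (κ₂ / p - 1) ≤ 3 * (p / (p - κ₁)) ^ (1 - κ₂ / κ₁) := by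
  have hκ₁ : 0 < κ₁ := hκ₂.trans_le hκ₁₂
  have hp : 0 < p := hκ₁.trans hκ₁p
  have hu : 0 < p / (p - κ₁) := div_pos hp (by linarith)
  have hθ : 1 - κ₁ / p = (p / (p - κ₁))⁻¹ := by field_simp
  have hexp : 1 - κ₂ / p = (1 - κ₂ / κ₁) + κ₂ / κ₁ / (p / (p - κ₁)) := by
    field_simp; ring
  calc (1 - κ₁ / p) ^ (κ₂ / p - 1) = (p / (p - κ₁)) ^ (1 - κ₂ / p) := by
        rw [hθ, Real.inv_rpow hu.le, ← Real.rpow_neg hu.le, neg_sub]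
    _ = (p / (p - κ₁)) ^ (1 - κ₂ / κ₁) * (p / (p - κ₁)) ^ (κ₂ / κ₁ / (p / (p - κ₁))) := by
        rw [hexp, Real.rpow_add hu]
    _ ≤ (p / (p - κ₁)) ^ (1 - κ₂ / κ₁) * 3 := by
        gcongr
        exact rpow_div_self_le_three hu (by positivity) ((div_le_one hκ₁).mpr hκ₁₂)
    _ = 3 * (p / (p - κ₁)) ^ (1 - κ₂ / κ₁) := mul_comm _ _

lemma rpow_one_div_mul_two_rpow_neg_le {κ₁ κ₂ C₀ p : ℝ} (hκ₂ : 0 ≤ κ₂) (hκ₂p : κ₂ ≤ p)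
    (hC₀ : 1 ≤ C₀) (hp : 1 ≤ p) {n : ℝ} (hn₀ : 0 ≤ n) (k : ℕ)
    (hn : n ≤ C₀ * (2 : ℝ) ^ (((k : ℝ) + 1) * κ₁) * (1 + ((k : ℝ) + 1) * Real.log 2) ^ (-κ₂)) :
    n ^ (1 / p) * (2 : ℝ) ^ (-(k : ℝ))
      ≤ 4 * C₀ * (((k : ℝ) + 1) ^ (-(κ₂ / p)) * ((2 : ℝ) ^ (-(1 - κ₁ / p))) ^ (k + 1)) := by
  have hp0 : 0 < p := by linarith
  have hm : (0 : ℝ) < k + 1 := by positivity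
  have hbase : 0 ≤ 1 + ((k : ℝ) + 1) * Real.log 2 := by positivity
  have hlog := one_add_mul_log_two_rpow_neg_le (by positivity) ((div_le_one hp0).mpr hκ₂p) hm
  have hroot : n ^ (1 / p) ≤ C₀ * (2 : ℝ) ^ (((k : ℝ) + 1) * κ₁ / p)
      * (1 + ((k : ℝ) + 1) * Real.log 2) ^ (-(κ₂ / p)) := by
    calc n ^ (1 / p)
        ≤ (C₀ * (2 : ℝ) ^ (((k : ℝ) + 1) * κ₁) * (1 + ((k : ℝ) + 1) * Real.log 2) ^ (-κ₂))
            ^ (1 / p) := by gcongr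
      _ = C₀ ^ (1 / p) * (2 : ℝ) ^ (((k : ℝ) + 1) * κ₁ / p)
            * (1 + ((k : ℝ) + 1) * Real.log 2) ^ (-(κ₂ / p)) := by
          rw [Real.mul_rpow (by positivity) (by positivity),
            Real.mul_rpow (by positivity) (by positivity), ← Real.rpow_mul (by norm_num),
            ← Real.rpow_mul hbase]
          ring_nf
      _ ≤ _ := by
          gcongr
          exact Real.rpow_le_self_of_one_le hC₀ ((div_le_one hp0).mpr hp)
  have hdyadic : (2 : ℝ) ^ (((k : ℝ) + 1) * κ₁ / p) * (2 : ℝ) ^ (-(k : ℝ))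
      = ((2 : ℝ) ^ (-(1 - κ₁ / p))) ^ (k + 1) * 2 := by
    rw [← Real.rpow_natCast, ← Real.rpow_mul (by norm_num), ← Real.rpow_add_one (by norm_num),
      ← Real.rpow_add (by norm_num)]
    congr 1
    push_cast; field_simp; ring
  calc n ^ (1 / p) * (2 : ℝ) ^ (-(k : ℝ))
      ≤ C₀ * (2 : ℝ) ^ (((k : ℝ) + 1) * κ₁ / p) * (2 * ((k : ℝ) + 1) ^ (-(κ₂ / p)))
          * (2 : ℝ) ^ (-(k : ℝ)) := by
        gcongr
        exact hroot.trans (by gcongr)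
    _ = 2 * C₀ * ((k : ℝ) + 1) ^ (-(κ₂ / p))
          * ((2 : ℝ) ^ (((k : ℝ) + 1) * κ₁ / p) * (2 : ℝ) ^ (-(k : ℝ))) := by ring
    _ = 4 * C₀ * (((k : ℝ) + 1) ^ (-(κ₂ / p)) * ((2 : ℝ) ^ (-(1 - κ₁ / p))) ^ (k + 1)) := by
        rw [hdyadic]; ring

lemma sum_range_rpow_one_div_mul_two_rpow_neg_le {κ₁ κ₂ C₀ p : ℝ} (hκ₂ : 0 < κ₂)
    (hκ₁₂ : κ₂ < κ₁) (hC₀ : 1 ≤ C₀) (hp : 1 ≤ p) (hκ₁p : κ₁ < p) {N : ℕ → ℕ}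
    (hN : ∀ k : ℕ, (N k : ℝ) ≤ C₀ * (2 : ℝ) ^ ((k : ℝ) * κ₁) * (1 + k * Real.log 2) ^ (-κ₂))
    (K : ℕ) :
    ∑ k ∈ range K, (N (k + 1) : ℝ) ^ (1 / p) * (2 : ℝ) ^ (-(k : ℝ))
      ≤ 12 * C₀ * (1 / (1 - κ₂ / κ₁) + 2) * (p / (p - κ₁)) ^ (1 - κ₂ / κ₁) := by
  have hκ₁ : 0 < κ₁ := hκ₂.trans hκ₁₂
  have hp0 : 0 < p := by linarith
  have hθ0 : 0 < 1 - κ₁ / p := by rw [sub_pos, div_lt_one hp0]; exact hκ₁p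
  have hθ1 : 1 - κ₁ / p ≤ 1 := by linarith [div_pos hκ₁ hp0]
  have hβγ : κ₂ / p ≤ κ₂ / κ₁ := div_le_div_of_nonneg_left hκ₂.le hκ₁ hκ₁p.le
  have hγ1 : κ₂ / κ₁ < 1 := (div_lt_one hκ₁).mpr hκ₁₂
  calc ∑ k ∈ range K, (N (k + 1) : ℝ) ^ (1 / p) * (2 : ℝ) ^ (-(k : ℝ))
      ≤ 4 * C₀ * ∑ k ∈ range K,
          ((k : ℝ) + 1) ^ (-(κ₂ / p)) * ((2 : ℝ) ^ (-(1 - κ₁ / p))) ^ (k + 1) := by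
        rw [mul_sum]
        refine sum_le_sum fun k _ => rpow_one_div_mul_two_rpow_neg_le hκ₂.le
          (hκ₁₂.le.trans hκ₁p.le) hC₀ hp (Nat.cast_nonneg _) k ?_
        simpa using hN (k + 1)
    _ ≤ 4 * C₀ * ((1 / (1 - κ₂ / p) + 2) * (1 - κ₁ / p) ^ (κ₂ / p - 1)) := by
        gcongr
        exact sum_range_add_one_rpow_neg_mul_pow_le (by positivity) (hβγ.trans_lt hγ1) hθ0 hθ1 K
    _ ≤ 4 * C₀ * ((1 / (1 - κ₂ / κ₁) + 2) * (3 * (p / (p - κ₁)) ^ (1 - κ₂ / κ₁))) := by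
        have : 0 < 1 - κ₂ / κ₁ := by linarith
        gcongr
        exact one_sub_div_rpow_le hκ₂ hκ₁₂.le hκ₁p
    _ = 12 * C₀ * (1 / (1 - κ₂ / κ₁) + 2) * (p / (p - κ₁)) ^ (1 - κ₂ / κ₁) := by ring

lemma natCast_rpow_one_div_mul_two_rpow_neg_le_one {n : ℕ} (hn : 1 ≤ n) {p : ℝ} (hp : 1 ≤ p) :
    (n : ℝ) ^ (1 / p) * (2 : ℝ) ^ (-(n : ℝ)) ≤ 1 := by
  have hp0 : 0 < p := by linarith
  calc (n : ℝ) ^ (1 / p) * (2 : ℝ) ^ (-(n : ℝ)) ≤ n * (2 ^ n)⁻¹ := by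
        rw [Real.rpow_neg (by norm_num), Real.rpow_natCast]
        gcongr
        exact Real.rpow_le_self_of_one_le (by exact_mod_cast hn) ((div_le_one hp0).mpr hp)
    _ ≤ 1 := by
        rw [← div_eq_mul_inv, div_le_one (by positivity)]
        exact_mod_cast n.lt_two_pow_self.le

lemma dyadic_chain_sum_le {κ₁ κ₂ C₀ p : ℝ} (hκ₂ : 0 < κ₂) (hκ₁₂ : κ₂ < κ₁) (hC₀ : 1 ≤ C₀)
    (hp : 1 ≤ p) (hκ₁p : κ₁ < p) {N : ℕ → ℕ}
    (hN : ∀ k : ℕ, (N k : ℝ) ≤ C₀ * (2 : ℝ) ^ ((k : ℝ) * κ₁) * (1 + k * Real.log 2) ^ (-κ₂))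
    {n : ℕ} (hn : 1 ≤ n) :
    (n : ℝ) ^ (1 / p) * (2 : ℝ) ^ (-(n : ℝ))
        + (∑ k ∈ range n, (N (k + 1) : ℝ) ^ (1 / p) * (2 : ℝ) ^ (-(k : ℝ)) + (N 0 : ℝ) ^ (1 / p))
      ≤ (1 + C₀ + 12 * C₀ * (1 / (1 - κ₂ / κ₁) + 2)) * (p / (p - κ₁)) ^ (1 - κ₂ / κ₁) := by
  have hp0 : 0 < p := by linarith
  have hγ : 0 < 1 - κ₂ / κ₁ := by rw [sub_pos, div_lt_one (hκ₂.trans hκ₁₂)]; exact hκ₁₂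
  have hu : 1 ≤ (p / (p - κ₁)) ^ (1 - κ₂ / κ₁) :=
    Real.one_le_rpow ((one_le_div (by linarith)).mpr (by linarith [hκ₂.trans hκ₁₂])) hγ.le
  have hroot : (N 0 : ℝ) ^ (1 / p) ≤ C₀ :=
    calc (N 0 : ℝ) ^ (1 / p) ≤ C₀ ^ (1 / p) := by gcongr; simpa using hN 0
      _ ≤ C₀ := Real.rpow_le_self_of_one_le hC₀ ((div_le_one hp0).mpr hp)
  have htop := natCast_rpow_one_div_mul_two_rpow_neg_le_one hn hp
  have hlinks := sum_range_rpow_one_div_mul_two_rpow_neg_le hκ₂ hκ₁₂ hC₀ hp hκ₁p hN n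
  linarith [mul_le_mul_of_nonneg_left hu (by positivity : (0 : ℝ) ≤ 1 + C₀)]

lemma abs_le_sum_add_of_nets {T : Type*} {F : ℕ → Set T} {π : ℕ → T → T}
    (hπ : ∀ k u, π k u ∈ F k) (f : T → ℝ) {c₀ : ℝ} {c : ℕ → ℝ}
    (h₀ : ∀ u ∈ F 0, |f u| ≤ c₀) (hc : ∀ k, ∀ u ∈ F (k + 1), |f u - f (π k u)| ≤ c k) :
    ∀ K, ∀ u ∈ F K, |f u| ≤ ∑ k ∈ range K, c k + c₀ := by
  intro K
  induction K with
  | zero => simpa using h₀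
  | succ K ih =>
    intro u hu
    calc |f u| ≤ |f u - f (π K u)| + |f (π K u)| :=
        sub_le_iff_le_add.mp (abs_sub_abs_le_abs_sub _ _)
      _ ≤ c K + (∑ k ∈ range K, c k + c₀) := add_le_add (hc K u hu) (ih _ (hπ K u))
      _ = ∑ k ∈ range (K + 1), c k + c₀ := by rw [sum_range_succ]; ring

lemma abs_iSup_le_of_nets {T : Type*} [Fintype T] [Nonempty T] (f : T → ℝ) {F : ℕ → Finset T}
    (hF : ∀ k, (F k).Nonempty) {π : ℕ → T → T} (hπ : ∀ k t, π k t ∈ F k) (K : ℕ) :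
    |⨆ t, f t| ≤ (univ.sup' univ_nonempty fun t => |f t - f (π K t)|)
      + (∑ k ∈ range K, (F (k + 1)).sup' (hF _) (fun u => |f u - f (π k u)|)
        + (F 0).sup' (hF 0) fun u => |f u|) := by
  obtain ⟨t, ht⟩ := exists_eq_ciSup_of_finite (f := f)
  rw [← ht]
  calc |f t| ≤ |f t - f (π K t)| + |f (π K t)| := sub_le_iff_le_add.mp (abs_sub_abs_le_abs_sub _ _)
    _ ≤ _ := add_le_add (le_sup' (fun t => |f t - f (π K t)|) (mem_univ t))
        (abs_le_sum_add_of_nets (F := fun k => (F k : Set T)) hπ f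
          (fun u hu => le_sup' (fun u => |f u|) hu)
          (fun k u hu => le_sup' (fun u => |f u - f (π k u)|) hu) K _ (hπ K t))

section LpNorm

variable {X : Type*} [MeasurableSpace X] {μ : Measure X}

lemma lpNorm_eq_eLpNorm (f : X → ℝ) {p : ℝ} (hp : 0 < p) :
    lpNorm μ f p = eLpNorm f (ENNReal.ofReal p) μ := by
  rw [eLpNorm_eq_lintegral_rpow_enorm_toReal (by simp [hp]) ENNReal.ofReal_ne_top,
    ENNReal.toReal_ofReal hp.le, _root_.lpNorm]
  congr 1
  refine lintegral_congr fun x => ?_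
  rw [Real.enorm_eq_ofReal_abs, ENNReal.ofReal_rpow_of_nonneg (abs_nonneg _) hp.le]

lemma lpNorm_mono_of_abs_le {f g : X → ℝ} (h : ∀ x, |f x| ≤ g x) {p : ℝ} (hp : 0 < p) :
    lpNorm μ f p ≤ lpNorm μ g p := by
  simpa only [lpNorm_eq_eLpNorm _ hp] using eLpNorm_mono_real h

lemma lpNorm_add_le {f g : X → ℝ} (hf : AEStronglyMeasurable f μ) (hg : AEStronglyMeasurable g μ)
    {p : ℝ} (hp : 1 ≤ p) : lpNorm μ (f + g) p ≤ lpNorm μ f p + lpNorm μ g p := by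
  simpa only [lpNorm_eq_eLpNorm _ (zero_lt_one.trans_le hp)] using
    eLpNorm_add_le hf hg (ENNReal.one_le_ofReal.mpr hp)

lemma lpNorm_sum_le {ι : Type*} {s : Finset ι} {f : ι → X → ℝ}
    (hf : ∀ i ∈ s, AEStronglyMeasurable (f i) μ) {p : ℝ} (hp : 1 ≤ p) :
    lpNorm μ (∑ i ∈ s, f i) p ≤ ∑ i ∈ s, lpNorm μ (f i) p := by
  simpa only [lpNorm_eq_eLpNorm _ (zero_lt_one.trans_le hp)] using
    eLpNorm_sum_le hf (ENNReal.one_le_ofReal.mpr hp)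

lemma lpNorm_le_of_glNorm_le {a : ℝ} {b : ℝ≥0∞} {ψ : ℝ → ℝ} {f : X → ℝ} {e : ℝ} (he : 0 ≤ e)
    (hf : glNorm μ a b ψ f ≤ ENNReal.ofReal e) {p : ℝ} (hp : p ∈ expSet a b) (hψ : 0 < ψ p) :
    lpNorm μ f p ≤ ENNReal.ofReal (e * ψ p) := by
  rw [ENNReal.ofReal_mul he, ← ENNReal.div_le_iff (by simpa using hψ) ENNReal.ofReal_ne_top]
  exact (le_iSup₂ (f := fun q (_ : q ∈ expSet a b) => lpNorm μ f q / ENNReal.ofReal (ψ q)) p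
    hp).trans hf

lemma measurable_sup'_abs {ι : Type*} {s : Finset ι} (hs : s.Nonempty) {g : ι → X → ℝ}
    (hg : ∀ i ∈ s, Measurable (g i)) : Measurable fun x => s.sup' hs fun i => |g i x| := by
  convert Finset.measurable_sup' hs (fun i hi => (hg i hi).abs) using 1
  ext x
  rw [Finset.sup'_apply]

lemma lpNorm_sup'_abs_le {ι : Type*} {s : Finset ι} (hs : s.Nonempty) {g : ι → X → ℝ}
    (hg : ∀ i ∈ s, Measurable (g i)) {p : ℝ} (hp : 0 < p) {c : ℝ}
    (hc : ∀ i ∈ s, lpNorm μ (g i) p ≤ ENNReal.ofReal c) :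
    lpNorm μ (fun x => s.sup' hs fun i => |g i x|) p ≤ ENNReal.ofReal ((#s : ℝ) ^ (1 / p) * c) := by
  have hpoint : ∀ x, ENNReal.ofReal (|(s.sup' hs fun i => |g i x|)| ^ p)
      ≤ ∑ i ∈ s, ENNReal.ofReal (|g i x| ^ p) := by
    intro x
    obtain ⟨i, hi, he⟩ := s.exists_mem_eq_sup' hs fun i => |g i x|
    rw [he, abs_abs]
    exact single_le_sum (f := fun i => ENNReal.ofReal (|g i x| ^ p)) (fun _ _ => zero_le) hi
  have hpow : ∀ i ∈ s, ∫⁻ x, ENNReal.ofReal (|g i x| ^ p) ∂μ ≤ ENNReal.ofReal c ^ p := by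
    intro i hi
    calc ∫⁻ x, ENNReal.ofReal (|g i x| ^ p) ∂μ = lpNorm μ (g i) p ^ p := by
          rw [_root_.lpNorm, ← ENNReal.rpow_mul, one_div_mul_cancel hp.ne', ENNReal.rpow_one]
      _ ≤ ENNReal.ofReal c ^ p := by gcongr; exact hc i hi
  calc lpNorm μ (fun x => s.sup' hs fun i => |g i x|) p
      ≤ (∑ i ∈ s, ∫⁻ x, ENNReal.ofReal (|g i x| ^ p) ∂μ) ^ (1 / p) := by
        rw [_root_.lpNorm, ← lintegral_finsetSum _ fun i hi =>
          ((hg i hi).abs.pow_const p).ennreal_ofReal]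
        gcongr with x
        exact hpoint x
    _ ≤ (#s * ENNReal.ofReal c ^ p) ^ (1 / p) := by
        gcongr
        simpa using sum_le_card_nsmul s _ _ hpow
    _ = ENNReal.ofReal ((#s : ℝ) ^ (1 / p) * c) := by
        rw [ENNReal.mul_rpow_of_nonneg _ _ (by positivity), ← ENNReal.rpow_mul,
          mul_one_div_cancel hp.ne', ENNReal.rpow_one, ENNReal.ofReal_mul (by positivity),
          ← ENNReal.ofReal_rpow_of_nonneg (by positivity) (by positivity), ENNReal.ofReal_natCast]

lemma lpNorm_iSup_le_of_nets {T : Type*} [Fintype T] [Nonempty T] {Y : T → X → ℝ}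
    (hY : ∀ t, Measurable (Y t)) {p : ℝ} (hp : 1 ≤ p) {F : ℕ → Finset T} {π : ℕ → T → T}
    (hπ : ∀ k t, π k t ∈ F k) {r : ℕ → ℝ} (hr₀ : ∀ k, 0 ≤ r k)
    (hr : ∀ k t, lpNorm μ (fun x => Y t x - Y (π k t) x) p ≤ ENNReal.ofReal (r k)) {c : ℝ}
    (hc₀ : 0 ≤ c) (hc : ∀ t, lpNorm μ (Y t) p ≤ ENNReal.ofReal c) (K : ℕ) :
    lpNorm μ (fun x => ⨆ t, Y t x) p
      ≤ ENNReal.ofReal ((Fintype.card T : ℝ) ^ (1 / p) * r K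
        + (∑ k ∈ range K, (#(F (k + 1)) : ℝ) ^ (1 / p) * r k
          + (#(F 0) : ℝ) ^ (1 / p) * c)) := by
  have hp0 : 0 < p := by linarith
  have hF : ∀ k, (F k).Nonempty := fun k => ⟨_, hπ k (Classical.arbitrary T)⟩
  set top := fun x => (univ : Finset T).sup' univ_nonempty fun t => |Y t x - Y (π K t) x|
  set link := fun k x => (F (k + 1)).sup' (hF _) fun u => |Y u x - Y (π k u) x|
  set root := fun x => (F 0).sup' (hF 0) fun u => |Y u x|
  have htop : Measurable top := measurable_sup'_abs _ fun t _ => (hY t).sub (hY _)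
  have hlink : ∀ k, Measurable (link k) := fun k =>
    measurable_sup'_abs _ fun u _ => (hY u).sub (hY _)
  have hroot : Measurable root := measurable_sup'_abs _ fun u _ => hY u
  have hsum : AEStronglyMeasurable (∑ k ∈ range K, link k) μ :=
    aestronglyMeasurable_sum _ fun k _ => (hlink k).aestronglyMeasurable
  have hminkowski : lpNorm μ (fun x => ⨆ t, Y t x) p
      ≤ lpNorm μ top p + (∑ k ∈ range K, lpNorm μ (link k) p + lpNorm μ root p) :=
    calc lpNorm μ (fun x => ⨆ t, Y t x) p
        ≤ lpNorm μ (top + ((∑ k ∈ range K, link k) + root)) p :=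
          lpNorm_mono_of_abs_le (fun x => by
            simpa [Finset.sum_apply] using abs_iSup_le_of_nets (Y · x) hF hπ K) hp0
      _ ≤ lpNorm μ top p + (lpNorm μ (∑ k ∈ range K, link k) p + lpNorm μ root p) :=
          (lpNorm_add_le htop.aestronglyMeasurable (hsum.add hroot.aestronglyMeasurable) hp).trans
            (by gcongr; exact lpNorm_add_le hsum hroot.aestronglyMeasurable hp)
      _ ≤ _ := by
          gcongr
          exact lpNorm_sum_le (fun k _ => (hlink k).aestronglyMeasurable) hp
  have hnn : ∀ (m : ℕ) {x : ℝ}, 0 ≤ x → 0 ≤ (m : ℝ) ^ (1 / p) * x := fun m x hx => by positivity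
  have hsum₀ := sum_nonneg fun k (_ : k ∈ range K) => hnn #(F (k + 1)) (hr₀ k)
  rw [ENNReal.ofReal_add (hnn _ (hr₀ K)) (add_nonneg hsum₀ (hnn _ hc₀)),
    ENNReal.ofReal_add hsum₀ (hnn _ hc₀), ENNReal.ofReal_sum_of_nonneg fun k _ => hnn _ (hr₀ k)]
  refine hminkowski.trans (add_le_add ?_ (add_le_add (sum_le_sum fun k _ => ?_) ?_))
  · simpa using lpNorm_sup'_abs_le univ_nonempty (fun t _ => (hY t).sub (hY _)) hp0
      fun t _ => hr K t
  · exact lpNorm_sup'_abs_le (hF _) (fun u _ => (hY u).sub (hY _)) hp0 fun u _ => hr k u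
  · exact lpNorm_sup'_abs_le (hF 0) (fun u _ => hY u) hp0 fun u _ => hc u

end LpNorm

/-- Entropy with logarithmic correction, case κ₂ < κ₁ (inequality (3.14)). -/
theorem log_entropy_BGL_lt (κ₁ κ₂ C₀ : ℝ) (hκ₂ : 0 < κ₂) (hκ₁₂ : κ₂ < κ₁) (hC₀ : 1 ≤ C₀) :
    ∃ C : ℝ, 0 < C ∧
      ∀ (X : Type*) [MeasurableSpace X], ∀ (μ : Measure X) [SigmaFinite μ],
      ∀ (a : ℝ) (b : ℝ≥0∞), 1 ≤ a → ENNReal.ofReal a < b → κ₁ < a →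
      ∀ (ψ : ℝ → ℝ), IsPsi a b ψ →
      ∀ (T : Type*) [Fintype T] [Nonempty T],
      ∀ (Y : T → X → ℝ), (∀ t, Measurable (Y t)) →
      (∀ t : T, glNorm μ a b ψ (Y t) ≤ 1) →
      (∀ ε : ℝ, 0 < ε → ε ≤ 1 → ∃ F : Finset T,
        ((F.card : ℝ) ≤ C₀ * ε ^ (-κ₁) * (1 + |Real.log ε|) ^ (-κ₂)) ∧
          ∀ t : T, ∃ s ∈ F, glNorm μ a b ψ (fun x => Y t x - Y s x) ≤ ENNReal.ofReal ε) →
      (⨆ p ∈ expSet a b,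
          lpNorm μ (fun x => ⨆ t, Y t x) p /
            ENNReal.ofReal ((p / (p - κ₁)) ^ (1 - κ₂ / κ₁) * ψ p)) ≤
        ENNReal.ofReal C := by
  have hγ : 0 < 1 - κ₂ / κ₁ := by rw [sub_pos, div_lt_one (hκ₂.trans hκ₁₂)]; exact hκ₁₂
  refine ⟨1 + C₀ + 12 * C₀ * (1 / (1 - κ₂ / κ₁) + 2), by positivity, ?_⟩
  intro X _ μ _ a b ha _ haκ ψ hψ T _ _ Y hY hY₁ hnet
  refine iSup₂_le fun p hp => ENNReal.div_le_of_le_mul ?_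
  have hp₁ : 1 ≤ p := ha.trans hp.1.le
  have hψp : 0 < ψ p := one_pos.trans_le (hψ.one_le p hp)
  have hdyadic : ∀ k : ℕ, ∃ F : Finset T,
      (#F : ℝ) ≤ C₀ * (2 : ℝ) ^ ((k : ℝ) * κ₁) * (1 + k * Real.log 2) ^ (-κ₂) ∧
        ∀ t, ∃ s ∈ F, glNorm μ a b ψ (fun x => Y t x - Y s x) ≤ ENNReal.ofReal (2 ^ (-(k : ℝ))) :=
    fun k => by
      simpa only [← Real.rpow_mul zero_le_two, neg_mul_neg, Real.log_rpow zero_lt_two, abs_mul,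
        abs_neg, Nat.abs_cast, abs_of_pos (Real.log_pos one_lt_two)] using
        hnet _ (by positivity)
          (Real.rpow_le_one_of_one_le_of_nonpos one_le_two (neg_nonpos.mpr k.cast_nonneg))
  choose F hF π hπ hπY using hdyadic
  refine (lpNorm_iSup_le_of_nets hY hp₁ hπ (fun k => by positivity)
    (fun k t => lpNorm_le_of_glNorm_le (by positivity) (hπY k t) hp hψp) (c := ψ p) hψp.le
    (fun t => by simpa using lpNorm_le_of_glNorm_le zero_le_one (by simpa using hY₁ t) hp hψp)
    (Fintype.card T)).trans ?_
  rw [← ENNReal.ofReal_mul (by positivity)]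
  refine ENNReal.ofReal_le_ofReal ?_
  have hsum := dyadic_chain_sum_le hκ₂ hκ₁₂ hC₀ hp₁ (haκ.trans hp.1) hF (Fintype.card_pos (α := T))
  calc _ = ((Fintype.card T : ℝ) ^ (1 / p) * 2 ^ (-(Fintype.card T : ℝ))
        + (∑ k ∈ range (Fintype.card T), (#(F (k + 1)) : ℝ) ^ (1 / p) * 2 ^ (-(k : ℝ))
          + (#(F 0) : ℝ) ^ (1 / p))) * ψ p := by
        simp only [add_mul, sum_mul, mul_assoc]
    _ ≤ _ := by
        rw [← mul_assoc]
        exact mul_le_mul_of_nonneg_right hsum hψp.le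
end
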